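/- Let α, β > 0, x₁, x₂ ∈ ℝ, let B(t,x;x₁,x₂) be the breather with any one of the speed pairs (δ₅,γ₅), (δ₇,γ₇), (δ₉,γ₉), and let B₁ = ∂_{x₁}B and B₂ = ∂_{x₂}B. Then for all (t,x) ∈ ℝ² the Wronskian determinant det W[B₁,B₂] = B₁ ∂_x B₂ − B₂ ∂_x B₁ equals − 8 α³ β³ (α² + β²) [ α sinh(2β y₂) − β sin(2α y₁) ] / ( α² + β² + α² cosh(2β y₂) − β² cos(2α y₁) )². -/

import Mathlib

noncomputable section

open Real

/-- The breather profile function `tilde B`. -/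
def Btil (α β δ γ x₁ x₂ t x : ℝ) : ℝ :=
  2 * arctan (β / α * sin (α * (x + δ * t + x₁)) / cosh (β * (x + γ * t + x₂)))

/-- The breather `B = ∂ₓ tilde B`. -/
def B (α β δ γ x₁ x₂ t x : ℝ) : ℝ :=
  deriv (Btil α β δ γ x₁ x₂ t) x

/-- The translation direction `B₁ = ∂_{x₁} B`, as a function of `x`. -/
def B1 (α β δ γ x₁ x₂ t : ℝ) : ℝ → ℝ :=
  fun x => deriv (fun a => B α β δ γ a x₂ t x) x₁

/-- The translation direction `B₂ = ∂_{x₂} B`, as a function of `x`. -/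
def B2 (α β δ γ x₁ x₂ t : ℝ) : ℝ → ℝ :=
  fun x => deriv (fun a => B α β δ γ x₁ a t x) x₂

def sN (α β u v : ℝ) : ℝ := 2*α*β*(α * cos (α*u) * cosh (β*v) - β * sin (α*u) * sinh (β*v))
def sN1 (α β u v : ℝ) : ℝ := 2*α*β*(-(α^2) * sin (α*u) * cosh (β*v) - α*β * cos (α*u) * sinh (β*v))
def sN2 (α β u v : ℝ) : ℝ := 2*α*β*(α*β * cos (α*u) * sinh (β*v) - β^2 * sin (α*u) * cosh (β*v))
def sD (α β u v : ℝ) : ℝ := α^2 * cosh (β*v)^2 + β^2 * sin (α*u)^2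
def sD1 (α β u v : ℝ) : ℝ := 2*α*β^2 * sin (α*u) * cos (α*u)
def sD2 (α β u v : ℝ) : ℝ := 2*α^2*β * cosh (β*v) * sinh (β*v)
def sN11 (α β u v : ℝ) : ℝ := 2*α*β*(-(α^3) * cos (α*u) * cosh (β*v) + α^2*β * sin (α*u) * sinh (β*v))
def sN12 (α β u v : ℝ) : ℝ := 2*α*β*(-(α^2*β) * sin (α*u) * sinh (β*v) - α*β^2 * cos (α*u) * cosh (β*v))
def sN22 (α β u v : ℝ) : ℝ := 2*α*β*(α*β^2 * cos (α*u) * cosh (β*v) - β^3 * sin (α*u) * sinh (β*v))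
def sD11 (α β u v : ℝ) : ℝ := 2*α^2*β^2*(cos (α*u)^2 - sin (α*u)^2)
def sD22 (α β u v : ℝ) : ℝ := 2*α^2*β^2*(sinh (β*v)^2 + cosh (β*v)^2)

def Ff (α β u v : ℝ) : ℝ := sN α β u v / sD α β u v
def Pf (α β u v : ℝ) : ℝ := (sN1 α β u v * sD α β u v - sN α β u v * sD1 α β u v) / (sD α β u v)^2
def Qf (α β u v : ℝ) : ℝ := (sN2 α β u v * sD α β u v - sN α β u v * sD2 α β u v) / (sD α β u v)^2
def PP (α β u v : ℝ) : ℝ :=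
  (((sN11 α β u v + sN12 α β u v) * sD α β u v + sN1 α β u v * sD2 α β u v
      - sN2 α β u v * sD1 α β u v - sN α β u v * sD11 α β u v) * sD α β u v
    - 2 * (sN1 α β u v * sD α β u v - sN α β u v * sD1 α β u v) * (sD1 α β u v + sD2 α β u v))
  / (sD α β u v)^3
def QQ (α β u v : ℝ) : ℝ :=
  (((sN12 α β u v + sN22 α β u v) * sD α β u v + sN2 α β u v * sD1 α β u v
      - sN1 α β u v * sD2 α β u v - sN α β u v * sD22 α β u v) * sD α β u v
    - 2 * (sN2 α β u v * sD α β u v - sN α β u v * sD2 α β u v) * (sD1 α β u v + sD2 α β u v))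
  / (sD α β u v)^3

lemma Dpos (α β u v : ℝ) (hα : α ≠ 0) : 0 < sD α β u v := by
  have := Real.cosh_pos (β*v)
  unfold sD; positivity

lemma hasDerivAt_Ff (α β a b k l : ℝ) (hα : α ≠ 0) (x : ℝ) :
    HasDerivAt (fun x => Ff α β (k*x+a) (l*x+b))
      (k * Pf α β (k*x+a) (l*x+b) + l * Qf α β (k*x+a) (l*x+b)) x := by
  have hu : HasDerivAt (fun x : ℝ => α*(k*x+a)) (α*k) x := by
    simpa using (((hasDerivAt_id x).const_mul k).add_const a).const_mul α
  have hv : HasDerivAt (fun x : ℝ => β*(l*x+b)) (β*l) x := by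
    simpa using (((hasDerivAt_id x).const_mul l).add_const b).const_mul β
  have hsin : HasDerivAt (fun x : ℝ => sin (α*(k*x+a))) (cos (α*(k*x+a)) * (α*k)) x :=
    (Real.hasDerivAt_sin _).comp x hu
  have hcos : HasDerivAt (fun x : ℝ => cos (α*(k*x+a))) (-sin (α*(k*x+a)) * (α*k)) x :=
    (Real.hasDerivAt_cos _).comp x hu
  have hsinh : HasDerivAt (fun x : ℝ => sinh (β*(l*x+b))) (cosh (β*(l*x+b)) * (β*l)) x :=
    (Real.hasDerivAt_sinh _).comp x hv
  have hcosh : HasDerivAt (fun x : ℝ => cosh (β*(l*x+b))) (sinh (β*(l*x+b)) * (β*l)) x :=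
    (Real.hasDerivAt_cosh _).comp x hv
  have hN := (((hcos.mul hcosh).const_mul α).sub ((hsin.mul hsinh).const_mul β)).const_mul (2*α*β)
  have hD := (((hcosh.pow 2).const_mul (α^2)).add ((hsin.pow 2).const_mul (β^2)))
  have hDne : (α^2 * cosh (β*(l*x+b))^2 + β^2 * sin (α*(k*x+a))^2) ≠ 0 := by
    have := Dpos α β (k*x+a) (l*x+b) hα; unfold sD at this; linarith
  have hF := hN.div hD hDne
  convert hF using 1
  · rfl
  · rfl
  · funext y; simp only [Pi.mul_apply, Pi.pow_apply, Pi.add_apply, Pi.sub_apply, Pi.neg_apply, Pi.div_apply]; unfold Ff sN sD; ring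
  simp only [Pi.mul_apply, Pi.pow_apply, Pi.add_apply, Pi.sub_apply, Pi.neg_apply, Pi.div_apply]
  unfold Pf Qf sN sN1 sN2 sD sD1 sD2
  push_cast
  have hD' := Dpos α β (k*x+a) (l*x+b) hα
  unfold sD at hD'
  field_simp
  ring

lemma hasDerivAt_Pf (α β a b : ℝ) (hα : α ≠ 0) (x : ℝ) :
    HasDerivAt (fun x => Pf α β (x+a) (x+b)) (PP α β (x+a) (x+b)) x := by
  have hu : HasDerivAt (fun x : ℝ => α*(x+a)) α x := by
    simpa using ((hasDerivAt_id x).add_const a).const_mul α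
  have hv : HasDerivAt (fun x : ℝ => β*(x+b)) β x := by
    simpa using ((hasDerivAt_id x).add_const b).const_mul β
  have hsin : HasDerivAt (fun x : ℝ => sin (α*(x+a))) (cos (α*(x+a)) * α) x :=
    (Real.hasDerivAt_sin _).comp x hu
  have hcos : HasDerivAt (fun x : ℝ => cos (α*(x+a))) (-sin (α*(x+a)) * α) x :=
    (Real.hasDerivAt_cos _).comp x hu
  have hsinh : HasDerivAt (fun x : ℝ => sinh (β*(x+b))) (cosh (β*(x+b)) * β) x :=
    (Real.hasDerivAt_sinh _).comp x hv
  have hcosh : HasDerivAt (fun x : ℝ => cosh (β*(x+b))) (sinh (β*(x+b)) * β) x :=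
    (Real.hasDerivAt_cosh _).comp x hv
  have hN := (((hcos.mul hcosh).const_mul α).sub ((hsin.mul hsinh).const_mul β)).const_mul (2*α*β)
  have hN1 := ((((hsin.mul hcosh).const_mul (α^2)).neg.sub ((hcos.mul hsinh).const_mul (α*β))).const_mul (2*α*β))
  have hD := (((hcosh.pow 2).const_mul (α^2)).add ((hsin.pow 2).const_mul (β^2)))
  have hD1 := ((hsin.mul hcos).const_mul (2*α*β^2))
  have hDne : (α^2 * cosh (β*(x+b))^2 + β^2 * sin (α*(x+a))^2) ≠ 0 := by
    have := Dpos α β (x+a) (x+b) hα; unfold sD at this; linarith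
  have hD2ne : (α^2 * cosh (β*(x+b))^2 + β^2 * sin (α*(x+a))^2)^2 ≠ 0 := pow_ne_zero _ hDne
  have hM := (hN1.mul hD).sub (hN.mul hD1)
  have hP := hM.div (hD.pow 2) hD2ne
  convert hP using 1
  · rfl
  · rfl
  · funext y
    simp only [Pi.mul_apply, Pi.pow_apply, Pi.add_apply, Pi.sub_apply, Pi.neg_apply, Pi.div_apply]
    unfold Pf sN sN1 sD sD1
    ring
  simp only [Pi.mul_apply, Pi.pow_apply, Pi.add_apply, Pi.sub_apply, Pi.neg_apply, Pi.div_apply]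
  unfold PP sN sN1 sN2 sD sD1 sD2 sN11 sN12 sD11
  have hD' := Dpos α β (x+a) (x+b) hα
  unfold sD at hD'
  field_simp
  ring

lemma hasDerivAt_Qf (α β a b : ℝ) (hα : α ≠ 0) (x : ℝ) :
    HasDerivAt (fun x => Qf α β (x+a) (x+b)) (QQ α β (x+a) (x+b)) x := by
  have hu : HasDerivAt (fun x : ℝ => α*(x+a)) α x := by
    simpa using ((hasDerivAt_id x).add_const a).const_mul α
  have hv : HasDerivAt (fun x : ℝ => β*(x+b)) β x := by
    simpa using ((hasDerivAt_id x).add_const b).const_mul β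
  have hsin : HasDerivAt (fun x : ℝ => sin (α*(x+a))) (cos (α*(x+a)) * α) x :=
    (Real.hasDerivAt_sin _).comp x hu
  have hcos : HasDerivAt (fun x : ℝ => cos (α*(x+a))) (-sin (α*(x+a)) * α) x :=
    (Real.hasDerivAt_cos _).comp x hu
  have hsinh : HasDerivAt (fun x : ℝ => sinh (β*(x+b))) (cosh (β*(x+b)) * β) x :=
    (Real.hasDerivAt_sinh _).comp x hv
  have hcosh : HasDerivAt (fun x : ℝ => cosh (β*(x+b))) (sinh (β*(x+b)) * β) x :=
    (Real.hasDerivAt_cosh _).comp x hv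
  have hN := (((hcos.mul hcosh).const_mul α).sub ((hsin.mul hsinh).const_mul β)).const_mul (2*α*β)
  have hN2 := (((hcos.mul hsinh).const_mul (α*β)).sub ((hsin.mul hcosh).const_mul (β^2))).const_mul (2*α*β)
  have hD := (((hcosh.pow 2).const_mul (α^2)).add ((hsin.pow 2).const_mul (β^2)))
  have hD2 := ((hcosh.mul hsinh).const_mul (2*α^2*β))
  have hDne : (α^2 * cosh (β*(x+b))^2 + β^2 * sin (α*(x+a))^2) ≠ 0 := by
    have := Dpos α β (x+a) (x+b) hα; unfold sD at this; linarith
  have hD2ne : (α^2 * cosh (β*(x+b))^2 + β^2 * sin (α*(x+a))^2)^2 ≠ 0 := pow_ne_zero _ hDne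
  have hM := (hN2.mul hD).sub (hN.mul hD2)
  have hQ := hM.div (hD.pow 2) hD2ne
  convert hQ using 1
  · rfl
  · rfl
  · funext y
    simp only [Pi.mul_apply, Pi.pow_apply, Pi.add_apply, Pi.sub_apply, Pi.neg_apply, Pi.div_apply]
    unfold Qf sN sN2 sD sD2
    ring
  simp only [Pi.mul_apply, Pi.pow_apply, Pi.add_apply, Pi.sub_apply, Pi.neg_apply, Pi.div_apply]
  unfold QQ sN sN1 sN2 sD sD1 sD2 sN12 sN22 sD22
  have hD' := Dpos α β (x+a) (x+b) hα
  unfold sD at hD'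
  field_simp
  ring

lemma key (α β y₁ y₂ : ℝ) (hα : 0 < α) (hβ : 0 < β) :
    Pf α β y₁ y₂ * QQ α β y₁ y₂ - Qf α β y₁ y₂ * PP α β y₁ y₂
      = -(8 * α^3 * β^3 * (α^2 + β^2)
            * (α * Real.sinh (2 * β * y₂) - β * Real.sin (2 * α * y₁)))
        / (α^2 + β^2 + α^2 * Real.cosh (2 * β * y₂) - β^2 * Real.cos (2 * α * y₁))^2 := by
  rw [show 2*β*y₂ = 2*(β*y₂) by ring, show 2*α*y₁ = 2*(α*y₁) by ring,
    Real.sinh_two_mul, Real.cosh_two_mul, Real.sin_two_mul, Real.cos_two_mul]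
  unfold Pf Qf PP QQ sN sN1 sN2 sD sD1 sD2 sN11 sN12 sN22 sD11 sD22
  set s := Real.sin (α*y₁) with hs
  set c := Real.cos (α*y₁) with hc
  set S := Real.sinh (β*y₂) with hS
  set C := Real.cosh (β*y₂) with hC
  have h1 : s^2 + c^2 = 1 := Real.sin_sq_add_cos_sq _
  have h2 : C^2 - S^2 = 1 := Real.cosh_sq_sub_sinh_sq _
  have hCpos : 0 < C := Real.cosh_pos _
  have hD : 0 < α^2*C^2 + β^2*s^2 := by positivity
  have hT : α^2 + β^2 + α^2*(C^2 + S^2) - β^2*(2*c^2 - 1) = 2*(α^2*C^2 + β^2*s^2) := by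
    linear_combination (-(α^2)) * h2 + (-(2*β^2)) * h1
  rw [hT]
  have h2D : (2*(α^2*C^2 + β^2*s^2)) ≠ 0 := by positivity
  rw [div_mul_div_comm, div_mul_div_comm, div_sub_div_same,
    div_eq_div_iff (by positivity) (by positivity)]
  linear_combination
    ((-16)*α^4*β^15*s^10*S*C + (32)*α^5*β^14*s^9*c*C^2 + (32)*α^5*β^14*s^9*c*S^2 + (-32)*α^6*β^13*s^8*S*C + (-48)*α^6*β^13*s^8*S*C^3 + (-32)*α^6*β^13*s^8*S^3*C + (-32)*α^6*β^13*s^8*c^2*S*C + (16)*α^6*β^13*s^10*S*C + (128)*α^7*β^12*s^7*c*C^4 + (128)*α^7*β^12*s^7*c*S^2*C^2 + (-128)*α^8*β^11*s^6*S*C^3 + (-32)*α^8*β^11*s^6*S*C^5 + (-128)*α^8*β^11*s^6*S^3*C^3 + (-128)*α^8*β^11*s^6*c^2*S*C^3 + (48)*α^8*β^11*s^8*S*C^3 + (192)*α^9*β^10*s^5*c*C^6 + (192)*α^9*β^10*s^5*c*S^2*C^4 + (-192)*α^10*β^9*s^4*S*C^5 + (32)*α^10*β^9*s^4*S*C^7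 + (-192)*α^10*β^9*s^4*S^3*C^5 + (-192)*α^10*β^9*s^4*c^2*S*C^5 + (32)*α^10*β^9*s^6*S*C^5 + (128)*α^11*β^8*s^3*c*C^8 + (128)*α^11*β^8*s^3*c*S^2*C^6 + (-128)*α^12*β^7*s^2*S*C^7 + (48)*α^12*β^7*s^2*S*C^9 + (-128)*α^12*β^7*s^2*S^3*C^7 + (-128)*α^12*β^7*s^2*c^2*S*C^7 + (-32)*α^12*β^7*s^4*S*C^7 + (32)*α^13*β^6*s*c*C^10 + (32)*α^13*β^6*s*c*S^2*C^8 + (-32)*α^14*β^5*S*C^9 + (16)*α^14*β^5*S*C^11 + (-32)*α^14*β^5*S^3*C^9 + (-32)*α^14*β^5*c^2*S*C^9 + (-48)*α^14*β^5*s^2*S*C^9 + (-16)*α^16*β^3*S*C^11) * h1 +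
    ((16)*α^3*β^16*s^11*c + (48)*α^5*β^14*s^9*c*C^2 + (-32)*α^5*β^14*s^9*c*S^2 + (16)*α^5*β^14*s^11*c + (32)*α^6*β^13*s^8*S*C + (-64)*α^6*β^13*s^10*S*C + (32)*α^7*β^12*s^7*c*C^4 + (-128)*α^7*β^12*s^7*c*S^2*C^2 + (80)*α^7*β^12*s^9*c*C^2 + (128)*α^8*β^11*s^6*S*C^3 + (-256)*α^8*β^11*s^8*S*C^3 + (-32)*α^9*β^10*s^5*c*C^6 + (-192)*α^9*β^10*s^5*c*S^2*C^4 + (160)*α^9*β^10*s^7*c*C^4 + (192)*α^10*β^9*s^4*S*C^5 + (-384)*α^10*β^9*s^6*S*C^5 + (-48)*α^11*β^8*s^3*c*C^8 + (-128)*α^11*β^8*s^3*c*S^2*C^6 + (160)*α^11*β^8*s^5*c*C^6 + (128)*α^12*β^7*s^2*S*C^7 + (-256)*α^12*β^7*s^4*S*C^7 + (-16)*α^13*β^6*s*c*C^10 + (-32)*α^13*β^6*s*c*S^2*C^8 + (80)*α^13*β^6*s^3*c*C^8 + (32)*α^14*β^5*S*C^9 + (-64)*α^14*β^5*s^2*S*C^9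 + (16)*α^15*β^4*s*c*C^10) * h2


lemma hasDerivAt_Btil (α β δ γ x₁ x₂ t x : ℝ) (hα : α ≠ 0) :
    HasDerivAt (Btil α β δ γ x₁ x₂ t) (Ff α β (x + δ*t + x₁) (x + γ*t + x₂)) x := by
  have hy1 : HasDerivAt (fun x : ℝ => α*(x + δ*t + x₁)) α x := by
    simpa using (((hasDerivAt_id x).add_const (δ*t)).add_const x₁).const_mul α
  have hy2 : HasDerivAt (fun x : ℝ => β*(x + γ*t + x₂)) β x := by
    simpa using (((hasDerivAt_id x).add_const (γ*t)).add_const x₂).const_mul β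
  have hsin : HasDerivAt (fun x : ℝ => sin (α*(x + δ*t + x₁)))
      (cos (α*(x + δ*t + x₁)) * α) x := (Real.hasDerivAt_sin _).comp x hy1
  have hnum := hsin.const_mul (β/α)
  have hch : HasDerivAt (fun x : ℝ => cosh (β*(x + γ*t + x₂)))
      (sinh (β*(x + γ*t + x₂)) * β) x := (Real.hasDerivAt_cosh _).comp x hy2
  have hu := hnum.div hch (Real.cosh_pos _).ne'
  have harc := ((Real.hasDerivAt_arctan _).comp x hu).const_mul 2
  have hBtil : Btil α β δ γ x₁ x₂ t =
      fun x => 2 * arctan (β / α * sin (α * (x + δ * t + x₁)) / cosh (β * (x + γ * t + x₂))) := rfl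
  rw [hBtil]
  convert harc using 1
  · rfl
  · rfl
  · rfl
  have hC := Real.cosh_pos (x := β*(x + γ*t + x₂))
  have hD := Dpos α β (x + δ*t + x₁) (x + γ*t + x₂) hα
  unfold sD at hD
  have h1 : (1 : ℝ) + (β / α * sin (α*(x + δ*t + x₁)) / cosh (β*(x + γ*t + x₂)))^2 ≠ 0 := by positivity
  simp only [Pi.div_apply]
  unfold Ff sN sD
  rw [div_eq_iff hD.ne']
  field_simp

lemma B_eq (α β δ γ x₁ x₂ t x : ℝ) (hα : α ≠ 0) :
    B α β δ γ x₁ x₂ t x = Ff α β (x + δ*t + x₁) (x + γ*t + x₂) :=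
  (hasDerivAt_Btil α β δ γ x₁ x₂ t x hα).deriv

lemma B1_eq (α β δ γ x₁ x₂ t x : ℝ) (hα : α ≠ 0) :
    B1 α β δ γ x₁ x₂ t x = Pf α β (x + δ*t + x₁) (x + γ*t + x₂) := by
  show deriv (fun a => B α β δ γ a x₂ t x) x₁ = _
  have hfun : (fun a => B α β δ γ a x₂ t x)
      = fun a => Ff α β (1*a + (x + δ*t)) (0*a + (x + γ*t + x₂)) := by
    funext a
    rw [B_eq α β δ γ a x₂ t x hα,
      show (1:ℝ)*a + (x + δ*t) = x + δ*t + a by ring,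
      show (0:ℝ)*a + (x + γ*t + x₂) = x + γ*t + x₂ by ring]
  rw [hfun, (hasDerivAt_Ff α β (x + δ*t) (x + γ*t + x₂) 1 0 hα x₁).deriv,
    show (1:ℝ)*x₁ + (x + δ*t) = x + δ*t + x₁ by ring,
    show (0:ℝ)*x₁ + (x + γ*t + x₂) = x + γ*t + x₂ by ring]
  ring

lemma B2_eq (α β δ γ x₁ x₂ t x : ℝ) (hα : α ≠ 0) :
    B2 α β δ γ x₁ x₂ t x = Qf α β (x + δ*t + x₁) (x + γ*t + x₂) := by
  show deriv (fun a => B α β δ γ x₁ a t x) x₂ = _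
  have hfun : (fun a => B α β δ γ x₁ a t x)
      = fun a => Ff α β (0*a + (x + δ*t + x₁)) (1*a + (x + γ*t)) := by
    funext a
    rw [B_eq α β δ γ x₁ a t x hα,
      show (0:ℝ)*a + (x + δ*t + x₁) = x + δ*t + x₁ by ring,
      show (1:ℝ)*a + (x + γ*t) = x + γ*t + a by ring]
  rw [hfun, (hasDerivAt_Ff α β (x + δ*t + x₁) (x + γ*t) 0 1 hα x₂).deriv,
    show (0:ℝ)*x₂ + (x + δ*t + x₁) = x + δ*t + x₁ by ring,
    show (1:ℝ)*x₂ + (x + γ*t) = x + γ*t + x₂ by ring]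
  ring

lemma derivB1 (α β δ γ x₁ x₂ t x : ℝ) (hα : α ≠ 0) :
    deriv (B1 α β δ γ x₁ x₂ t) x = PP α β (x + δ*t + x₁) (x + γ*t + x₂) := by
  have hfun : B1 α β δ γ x₁ x₂ t = fun x => Pf α β (x + (δ*t + x₁)) (x + (γ*t + x₂)) := by
    funext y
    rw [B1_eq α β δ γ x₁ x₂ t y hα,
      show y + (δ*t + x₁) = y + δ*t + x₁ by ring,
      show y + (γ*t + x₂) = y + γ*t + x₂ by ring]
  rw [hfun, (hasDerivAt_Pf α β (δ*t + x₁) (γ*t + x₂) hα x).deriv,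
    show x + (δ*t + x₁) = x + δ*t + x₁ by ring,
    show x + (γ*t + x₂) = x + γ*t + x₂ by ring]

lemma derivB2 (α β δ γ x₁ x₂ t x : ℝ) (hα : α ≠ 0) :
    deriv (B2 α β δ γ x₁ x₂ t) x = QQ α β (x + δ*t + x₁) (x + γ*t + x₂) := by
  have hfun : B2 α β δ γ x₁ x₂ t = fun x => Qf α β (x + (δ*t + x₁)) (x + (γ*t + x₂)) := by
    funext y
    rw [B2_eq α β δ γ x₁ x₂ t y hα,
      show y + (δ*t + x₁) = y + δ*t + x₁ by ring,
      show y + (γ*t + x₂) = y + γ*t + x₂ by ring]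
  rw [hfun, (hasDerivAt_Qf α β (δ*t + x₁) (γ*t + x₂) hα x).deriv,
    show x + (δ*t + x₁) = x + δ*t + x₁ by ring,
    show x + (γ*t + x₂) = x + γ*t + x₂ by ring]

theorem wronskian_of_kernel_elements
    (α β x₁ x₂ : ℝ) (hα : 0 < α) (hβ : 0 < β) (δ γ : ℝ)
    (hs : (δ, γ) = (-α^4 + 10*α^2*β^2 - 5*β^4, -β^4 + 10*α^2*β^2 - 5*α^4) ∨
          (δ, γ) = (α^6 - 21*α^4*β^2 + 35*α^2*β^4 - 7*β^6,
                    7*α^6 - 35*α^4*β^2 + 21*α^2*β^4 - β^6) ∨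
          (δ, γ) = (-α^8 + 36*α^6*β^2 - 126*α^4*β^4 + 84*α^2*β^6 - 9*β^8,
                    -9*α^8 + 84*α^6*β^2 - 126*α^4*β^4 + 36*α^2*β^6 - β^8)) :
    ∀ t x : ℝ,
      B1 α β δ γ x₁ x₂ t x * deriv (B2 α β δ γ x₁ x₂ t) x
        - B2 α β δ γ x₁ x₂ t x * deriv (B1 α β δ γ x₁ x₂ t) x
      = -(8 * α^3 * β^3 * (α^2 + β^2)
            * (α * Real.sinh (2 * β * (x + γ * t + x₂))
               - β * Real.sin (2 * α * (x + δ * t + x₁))))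
        / (α^2 + β^2 + α^2 * Real.cosh (2 * β * (x + γ * t + x₂))
            - β^2 * Real.cos (2 * α * (x + δ * t + x₁)))^2 := by
  intro t x
  rw [B1_eq α β δ γ x₁ x₂ t x hα.ne', B2_eq α β δ γ x₁ x₂ t x hα.ne',
    derivB1 α β δ γ x₁ x₂ t x hα.ne', derivB2 α β δ γ x₁ x₂ t x hα.ne']
  exact key α β (x + δ*t + x₁) (x + γ*t + x₂) hα hβ
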